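/- arXiv:1504.01712 — 2 statements merged into one kernel-verified Lean document; each statement's English description precedes it below -/
import Mathlib

section
/- In OPol_n, the generating function identity E(t) = Π_{i=1}^n (1 + x_i t) = Σ_{k=0}^n (−1)^{binom(k,2)} e_k t^k holds, where t is a supercentral odd variable adjoined to OPol_n. -/
/-!
Peel off the first variable: `E(t) = (1 + x₀ t) E'(t)`, where `E'` is the generating function
of `x' = (x₁, …, xₙ₋₁)`, and `e_{k+1}(x) = e_{k+1}(x') + x₀ e_k(x')`. Moving `t` to the right across
`e_k(x')`, a sum of products of `k` odd variables, costs the sign `(-1)^k`, which is exactly the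
ratio `(-1)^C(k+1,2) / (-1)^C(k,2)`.
-/

/-- The `k`-th untwisted odd elementary symmetric polynomial
`e_k = Σ_{i_1<…<i_k} x_{i_1}⋯x_{i_k}`. -/
noncomputable def oddE {A : Type*} [Ring A] {n : ℕ} (x : Fin n → A) (k : ℕ) : A :=
  ∑ s ∈ Finset.powersetCard k (Finset.univ : Finset (Fin n)),
    ((Finset.sort s (· ≤ ·)).map x).prod

open Finset

theorem Finset.sum_powersetCard_succ_insert {α β : Type*} [DecidableEq α] [AddCommMonoid β]
    {a : α} {s : Finset α} (ha : a ∉ s) (k : ℕ) (f : Finset α → β) :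
    ∑ u ∈ powersetCard (k + 1) (insert a s), f u =
      ∑ u ∈ powersetCard (k + 1) s, f u + ∑ u ∈ powersetCard k s, f (insert a u) := by
  have notMem {j : ℕ} {u : Finset α} (hu : u ∈ powersetCard j s) : a ∉ u :=
    fun h => ha ((mem_powersetCard.mp hu).1 h)
  rw [powersetCard_succ_insert ha, sum_union, sum_image]
  · exact fun u hu v hv huv => by
      simpa [erase_insert (notMem hu), erase_insert (notMem hv)] using
        congrArg (erase · a) huv
  · refine disjoint_right.mpr fun u hu hu' => ?_
    obtain ⟨v, -, rfl⟩ := mem_image.mp hu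
    exact notMem hu' (mem_insert_self a v)

theorem Fin.sort_map_succEmb {n : ℕ} (s : Finset (Fin n)) :
    (s.map (Fin.succEmb n)).sort = s.sort.map Fin.succ :=
  (map_sort _ _ _ _ fun _ _ _ _ => Fin.succ_le_succ_iff.symm).symm

section Anticommute

variable {A : Type*} [Ring A]

theorem mul_list_prod_of_anticomm (t : A) :
    ∀ l : List A, (∀ a ∈ l, a * t = -(t * a)) →
      t * l.prod = (-1) ^ l.length * (l.prod * t)
  | [], _ => by simp
  | a :: l, h => by
    have ih := mul_list_prod_of_anticomm t l fun b hb => h b (List.mem_cons_of_mem a hb)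
    have hta : t * a = -(a * t) := by rw [h a List.mem_cons_self, neg_neg]
    have hcomm : Commute a ((-1 : A) ^ l.length) := ((Commute.neg_one_right a).pow_right _)
    calc t * (a :: l).prod = -(a * (t * l.prod)) := by
          rw [List.prod_cons, ← mul_assoc, hta, neg_mul, mul_assoc]
      _ = (-1) ^ (a :: l).length * ((a :: l).prod * t) := by
          rw [ih, ← mul_assoc, hcomm.eq, List.length_cons, List.prod_cons, pow_succ]
          simp only [mul_assoc, mul_neg, mul_one, neg_mul]

variable {n : ℕ}

theorem mul_oddE_of_anticomm (x : Fin n → A) (t : A) (hxt : ∀ i, x i * t = -(t * x i))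
    (k : ℕ) : t * oddE x k = (-1) ^ k * (oddE x k * t) := by
  simp only [oddE, mul_sum, sum_mul]
  refine sum_congr rfl fun s hs => ?_
  rw [mul_list_prod_of_anticomm t _ (by simpa using fun i _ => hxt i), List.length_map,
    length_sort, (mem_powersetCard.mp hs).2]

end Anticommute

section OddE

variable {A : Type*} [Ring A] {n : ℕ}

@[simp]
theorem oddE_zero (x : Fin n → A) : oddE x 0 = 1 := by
  simp [oddE]

theorem oddE_eq_zero_of_lt (x : Fin n → A) {k : ℕ} (hk : n < k) : oddE x k = 0 := by
  rw [oddE, powersetCard_eq_empty.mpr (by simpa using hk), sum_empty]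

theorem oddE_succ (x : Fin (n + 1) → A) (k : ℕ) :
    oddE x (k + 1) = oddE (x ∘ Fin.succ) (k + 1) + x 0 * oddE (x ∘ Fin.succ) k := by
  have h0 : (0 : Fin (n + 1)) ∉ univ.map (Fin.succEmb n) := by simp [Fin.succ_ne_zero]
  have huniv : (univ : Finset (Fin (n + 1))) = insert 0 (univ.map (Fin.succEmb n)) := by
    rw [Fin.univ_succ, cons_eq_insert]
    rfl
  rw [oddE, huniv, sum_powersetCard_succ_insert h0, powersetCard_map, powersetCard_map,
    sum_map, sum_map, oddE, oddE, mul_sum]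
  congr 1 <;> refine sum_congr rfl fun s _ => ?_
  · simp [Fin.sort_map_succEmb, List.map_map]
  · rw [RelEmbedding.coe_toEmbedding, mapEmbedding_apply,
      sort_insert _ (fun b _ => Fin.zero_le b) (by simp [Fin.succ_ne_zero]), Fin.sort_map_succEmb]
    simp [List.map_map]

end OddE

section GeneratingFunction

variable {A : Type*} [Ring A] {n : ℕ}

noncomputable def oddETerm (x : Fin n → A) (t : A) (k : ℕ) : A :=
  (-1) ^ k.choose 2 * (oddE x k * t ^ k)

@[simp]
theorem oddETerm_zero (x : Fin n → A) (t : A) : oddETerm x t 0 = 1 := by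
  simp [oddETerm]

theorem oddETerm_eq_zero_of_lt (x : Fin n → A) (t : A) {k : ℕ} (hk : n < k) :
    oddETerm x t k = 0 := by
  rw [oddETerm, oddE_eq_zero_of_lt x hk, zero_mul, mul_zero]

theorem oddETerm_succ (x : Fin (n + 1) → A) (t : A)
    (hxt : ∀ i : Fin n, x i.succ * t = -(t * x i.succ)) (k : ℕ) :
    oddETerm x t (k + 1) =
      oddETerm (x ∘ Fin.succ) t (k + 1) + x 0 * t * oddETerm (x ∘ Fin.succ) t k := by
  have hsign : (-1 : A) ^ (k + 1).choose 2 = (-1) ^ k.choose 2 * (-1) ^ k := by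
    rw [Nat.choose_succ_succ, Nat.choose_one_right, add_comm, pow_add]
  have hcomm (a : A) (m : ℕ) : Commute ((-1) ^ m) a := (Commute.neg_one_left a).pow_left m
  simp only [oddETerm, oddE_succ, add_mul, mul_add]
  congr 1
  calc (-1) ^ (k + 1).choose 2 * (x 0 * oddE (x ∘ Fin.succ) k * t ^ (k + 1))
      = (-1) ^ k.choose 2 * (x 0 * ((-1) ^ k * (oddE (x ∘ Fin.succ) k * t)) * t ^ k) := by
        rw [hsign, pow_succ']
        simp only [← mul_assoc]
        rw [mul_assoc _ (_ ^ k) (x 0), (hcomm (x 0) k).eq, ← mul_assoc]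
    _ = x 0 * t * ((-1) ^ k.choose 2 * (oddE (x ∘ Fin.succ) k * t ^ k)) := by
        rw [← mul_oddE_of_anticomm (x ∘ Fin.succ) t hxt]
        simp only [← mul_assoc]
        rw [mul_assoc _ (x 0) t, (hcomm (x 0 * t) _).eq]

end GeneratingFunction

theorem stmt2_general {A : Type*} [Ring A] {n : ℕ} (x : Fin n → A)
    (t : A) (hxt : ∀ i, x i * t = -(t * x i)) :
    ((List.finRange n).map fun i => 1 + x i * t).prod =
      ∑ k ∈ Finset.range (n + 1), (-1 : A) ^ (k.choose 2) * (oddE x k * t ^ k) := by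
  change _ = ∑ k ∈ range (n + 1), oddETerm x t k
  induction n with
  | zero => simp
  | succ n ih =>
    set y := x ∘ Fin.succ
    rw [List.finRange_succ, List.map_cons, List.prod_cons, List.map_map]
    change (1 + x 0 * t) * ((List.finRange n).map fun i => 1 + y i * t).prod = _
    rw [ih y fun i => hxt i.succ]
    calc (1 + x 0 * t) * ∑ k ∈ range (n + 1), oddETerm y t k
        = ∑ k ∈ range (n + 2), oddETerm y t k +
            x 0 * t * ∑ k ∈ range (n + 1), oddETerm y t k := by
          rw [sum_range_succ _ (n + 1), oddETerm_eq_zero_of_lt y t (Nat.lt_succ_self n),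
            add_zero, add_mul, one_mul]
      _ = 1 + ∑ k ∈ range (n + 1), (oddETerm y t (k + 1) + x 0 * t * oddETerm y t k) := by
          rw [sum_range_succ', sum_add_distrib, mul_sum, oddETerm_zero]
          abel
      _ = ∑ k ∈ range (n + 2), oddETerm x t k := by
          rw [sum_range_succ' _ (n + 1), oddETerm_zero, add_comm]
          simp only [oddETerm_succ x t fun i => hxt i.succ, y]

/-- In `OPol_n` with a supercentral odd variable `t` adjoined
(`t` anticommutes with each `x_i`), the generating function identity
`E(t) = Π_{i=1}^n (1 + x_i t) = Σ_{k=0}^n (−1)^{C(k,2)} e_k t^k` holds. -/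
theorem stmt2 {A : Type*} [Ring A] {n : ℕ} (x : Fin n → A)
    (hxx : ∀ i j, i ≠ j → x i * x j = -(x j * x i))
    (t : A) (hxt : ∀ i, x i * t = -(t * x i)) :
    ((List.finRange n).map fun i => 1 + x i * t).prod =
      ∑ k ∈ Finset.range (n + 1), (-1 : A) ^ (k.choose 2) * (oddE x k * t ^ k) :=
  stmt2_general x t hxt
end

section
/- In ONH_n with the local differential (d(x_i) = x_i², d(∂_i) = 1), the idempotent 𝚎_n = (−1)^{binom(n,3)} ∂_{w_0} x^δ satisfies d(𝚎_n) = Σ_{i=1}^n {i−1} x_i 𝚎_n. -/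
/-!
Write `𝚎_n = ±∂_{w_0} x^δ`. Both factors have explicit derivatives under the twisted Leibniz
rule. First, `d(x_i^k) = {k} x_i^{k+1}`, and the sign picked up by moving `x_i` to the front of
`x^δ` is undone by `ι`, so `d(x^δ) = Σ {n-i} x_i x^δ`. Second,
`d(∂_{w_0}) = Σ {i-1} x_i ∂_{w_0} - (-1)^{ℓ(w_0)} Σ {n-i} ∂_{w_0} x_i`, by induction along
`∂_{w_0}^{(m+1)} = ∂_{w_0}^{(m)} ∂_m ⋯ ∂_1`: the derivative of `∂_m ⋯ ∂_1` is rewritten with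
`x_i ∂_i + ∂_i x_{i+1} = 1`, and `∂_{w_0}^{(m)}` annihilates every `∂_j` with `j < m`. In
`d(∂_{w_0} x^δ) = d(∂_{w_0}) x^δ + ι(∂_{w_0}) d(x^δ)` the second sum of `d(∂_{w_0})` cancels
against `ι(∂_{w_0}) d(x^δ)`, which leaves `Σ {i-1} x_i ∂_{w_0} x^δ`.
-/

/-- The (0-indexed) word `∂_1(∂_2∂_1)⋯(∂_{n−1}⋯∂_1)` of simple indices defining
the longest odd divided difference operator `∂_{w_0}`. -/
def w0List : ℕ → List ℕ
  | 0 => []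
  | n + 1 => w0List n ++ (List.range n).reverse

/-- The staircase monomial `x^δ = x_1^{n−1} x_2^{n−2} ⋯ x_{n−1}`. -/
noncomputable def xDeltaN {A : Type*} [Ring A] (n : ℕ) (x : ℕ → A) : A :=
  ((List.range n).map fun i => x i ^ (n - 1 - i)).prod

/-- The element `𝚎_n = (−1)^{C(n,3)} ∂_{w_0} x^δ` of the odd nilHecke algebra. -/
noncomputable def onhIdem {A : Type*} [Ring A] (n : ℕ) (x D : ℕ → A) : A :=
  (-1 : A) ^ (n.choose 3) * (((w0List n).map D).prod * xDeltaN n x)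

namespace OddNilHecke

open Finset

variable {A : Type*} [Ring A]

/-- The paper's `{k}`. -/
def parity (k : ℕ) : ℤ := if Even k then 0 else 1

theorem parity_add_one (k : ℕ) : parity (k + 1) = 1 - parity k := by
  by_cases h : Even k <;> simp [parity, h, Nat.even_add_one]

theorem sum_parity_sub_smul (m : ℕ) (f : ℕ → A) :
    ∑ i ∈ range m, parity (m - i) • f i =
      ∑ i ∈ range m, f i - ∑ i ∈ range m, parity (m - (i + 1)) • f i := by
  rw [← sum_sub_distrib]
  refine sum_congr rfl fun i hi => ?_
  rw [mem_range] at hi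
  rw [show m - i = m - (i + 1) + 1 by omega, parity_add_one, sub_smul, one_smul]

theorem ite_even_mul_eq_parity_smul (k : ℕ) (a : A) :
    (if Even k then (0 : A) else 1) * a = parity k • a := by
  by_cases h : Even k <;> simp [parity, h]

theorem neg_one_pow_smul_neg_one_pow_smul (k : ℕ) (a : A) :
    (-1 : ℤ) ^ k • (-1 : ℤ) ^ k • a = a := by
  rw [smul_smul, ← pow_add, ← two_mul, pow_mul, neg_one_sq, one_pow, one_smul]

theorem mul_comm_of_eq_neg_one_pow_smul {a b : A} {k : ℕ}
    (h : a * b = (-1 : ℤ) ^ k • (b * a)) : b * a = (-1 : ℤ) ^ k • (a * b) := by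
  rw [h, neg_one_pow_smul_neg_one_pow_smul]

theorem list_prod_mul_of_forall_anticomm {l : List A} {y : A} (h : ∀ a ∈ l, a * y = -(y * a)) :
    l.prod * y = (-1 : ℤ) ^ l.length • (y * l.prod) := by
  induction l with
  | nil => simp
  | cons a l ih =>
    rw [List.forall_mem_cons] at h
    rw [List.prod_cons, mul_assoc, ih h.2, mul_smul_comm, ← mul_assoc, h.1, List.length_cons,
      pow_succ, mul_neg_one, neg_smul, neg_mul, smul_neg, mul_assoc]

theorem pow_mul_of_anticomm {a y : A} (h : a * y = -(y * a)) (k : ℕ) :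
    a ^ k * y = (-1 : ℤ) ^ k • (y * a ^ k) := by
  simpa using list_prod_mul_of_forall_anticomm (l := List.replicate k a) (y := y) (by simp [h])

theorem map_list_prod_of_forall_eq_neg (f : A →+* A) {l : List A} (h : ∀ a ∈ l, f a = -a) :
    f l.prod = (-1 : ℤ) ^ l.length • l.prod := by
  induction l with
  | nil => simp
  | cons a l ih =>
    rw [List.forall_mem_cons] at h
    rw [List.prod_cons, map_mul, h.1, ih h.2, mul_smul_comm, List.length_cons, pow_succ,
      mul_neg_one, neg_smul, neg_mul, smul_neg]

theorem map_pow_of_eq_neg (f : A →+* A) {a : A} (h : f a = -a) (k : ℕ) :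
    f (a ^ k) = (-1 : ℤ) ^ k • a ^ k := by
  simpa using map_list_prod_of_forall_eq_neg f (l := List.replicate k a) (by simp [h])

section TwistedDerivation

variable {ι : A →+* A} {d : A → A} (hd : ∀ a b, d (a * b) = d a * b + ι a * d b)
include hd

theorem map_one_eq_zero_of_twisted_leibniz : d 1 = 0 := by
  simpa using hd 1 1

theorem map_pow_of_twisted_leibniz {a : A} (hι : ι a = -a) (hda : d a = a ^ 2) (k : ℕ) :
    d (a ^ k) = parity k • a ^ (k + 1) := by
  induction k with
  | zero => simp [map_one_eq_zero_of_twisted_leibniz hd, parity]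
  | succ k ih =>
    rw [pow_succ', hd, hda, hι, ih, mul_smul_comm, neg_mul, ← pow_succ', ← pow_add,
      parity_add_one, sub_smul, one_smul, sub_eq_add_neg, smul_neg, add_comm 2 k]

end TwistedDerivation

/-- The defining relations of `ONH_n`, 0-indexed: `x i` is `x_{i+1}` and `D i` is `∂_{i+1}`. -/
structure Relations (n : ℕ) (x D : ℕ → A) : Prop where
  x_anticomm : ∀ i j, i < n → j < n → i ≠ j → x i * x j = -(x j * x i)
  D_anticomm : ∀ i j, i + 1 < n → j + 1 < n → (i + 1 < j ∨ j + 1 < i) →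
    D i * D j = -(D j * D i)
  D_sq : ∀ i, i + 1 < n → D i * D i = 0
  braid : ∀ i, i + 2 < n → D i * D (i + 1) * D i = D (i + 1) * D i * D (i + 1)
  D_x_anticomm : ∀ i j, i + 1 < n → j < n → j ≠ i → j ≠ i + 1 →
    D i * x j = -(x j * D i)
  x_D_add_D_x : ∀ i, i + 1 < n → x i * D i + D i * x (i + 1) = 1
  D_x_add_x_D : ∀ i, i + 1 < n → D i * x i + x (i + 1) * D i = 1

/-- The local differential of `ONH_n`, twisted by the parity involution `ι`. -/
structure LocalDifferential (n : ℕ) (x D : ℕ → A) (ι : A →+* A) (d : A → A) : Prop where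
  iota_x : ∀ i, i < n → ι (x i) = -x i
  iota_D : ∀ i, i + 1 < n → ι (D i) = -D i
  add : ∀ a b, d (a + b) = d a + d b
  leibniz : ∀ a b, d (a * b) = d a * b + ι a * d b
  d_x : ∀ i, i < n → d (x i) = x i ^ 2
  d_D : ∀ i, i + 1 < n → d (D i) = 1

def xMonomial (x : ℕ → A) (e : ℕ → ℕ) (k : ℕ) : A :=
  ((List.range k).map fun i => x i ^ e i).prod

variable {n : ℕ} {x D : ℕ → A} {ι : A →+* A} {d : A → A}

theorem xMonomial_zero (e : ℕ → ℕ) : xMonomial x e 0 = 1 := rfl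

theorem xMonomial_succ (e : ℕ → ℕ) (k : ℕ) :
    xMonomial x e (k + 1) = xMonomial x e k * x k ^ e k :=
  List.prod_range_succ _ _

theorem Relations.xMonomial_mul_x (R : Relations n x D) (e : ℕ → ℕ) {j k : ℕ}
    (hkj : k ≤ j) (hj : j < n) :
    xMonomial x e k * x j = (-1 : ℤ) ^ (∑ i ∈ range k, e i) • (x j * xMonomial x e k) := by
  induction k with
  | zero => simp [xMonomial_zero]
  | succ k ih =>
    have hpow := pow_mul_of_anticomm (R.x_anticomm k j (by omega) hj (by omega)) (e k)
    rw [xMonomial_succ, mul_assoc, hpow, mul_smul_comm, ← mul_assoc, ih (by omega),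
      smul_mul_assoc, smul_smul, sum_range_succ, pow_add, mul_comm, mul_assoc]

theorem LocalDifferential.iota_xMonomial (L : LocalDifferential n x D ι d) (e : ℕ → ℕ)
    {k : ℕ} (hk : k ≤ n) :
    ι (xMonomial x e k) = (-1 : ℤ) ^ (∑ i ∈ range k, e i) • xMonomial x e k := by
  induction k with
  | zero => simp [xMonomial_zero]
  | succ k ih =>
    rw [xMonomial_succ, map_mul, ih (by omega), map_pow_of_eq_neg ι (L.iota_x k (by omega)),
      smul_mul_assoc, mul_smul_comm, smul_smul, sum_range_succ, pow_add]

theorem LocalDifferential.d_xMonomial (L : LocalDifferential n x D ι d) (R : Relations n x D)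
    (e : ℕ → ℕ) {k : ℕ} (hk : k ≤ n) :
    d (xMonomial x e k) = ∑ i ∈ range k, parity (e i) • (x i * xMonomial x e k) := by
  induction k with
  | zero => simp [xMonomial_zero, map_one_eq_zero_of_twisted_leibniz L.leibniz]
  | succ k ih =>
    have hlast : ι (xMonomial x e k) * d (x k ^ e k) =
        parity (e k) • (x k * xMonomial x e (k + 1)) := by
      rw [L.iota_xMonomial e (by omega),
        map_pow_of_twisted_leibniz L.leibniz (L.iota_x k (by omega)) (L.d_x k (by omega)),
        pow_succ']
      simp only [smul_mul_assoc, mul_smul_comm]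
      rw [← mul_assoc, R.xMonomial_mul_x e le_rfl (by omega), smul_mul_assoc,
        neg_one_pow_smul_neg_one_pow_smul, mul_assoc, ← xMonomial_succ]
    rw [xMonomial_succ, L.leibniz, ih (by omega), hlast, sum_range_succ, sum_mul, xMonomial_succ]
    congr 1
    exact sum_congr rfl fun i _ => by rw [smul_mul_assoc, mul_assoc]

/-- `∂_m ⋯ ∂_{k+1}`, i.e. `D (m - 1) * ⋯ * D k`. -/
def dSeg (D : ℕ → A) (k m : ℕ) : A :=
  ((List.range' k (m - k)).reverse.map D).prod

/-- `∂_{w_0}` of `ONH_m`. -/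
def dLongest (D : ℕ → A) (m : ℕ) : A :=
  ((w0List m).map D).prod

theorem mem_reverse_range'_sub {i k m : ℕ} :
    i ∈ (List.range' k (m - k)).reverse ↔ k ≤ i ∧ i < m := by
  rw [List.mem_reverse, List.mem_range'_1]
  omega

theorem dSeg_of_le {k m : ℕ} (h : m ≤ k) : dSeg D k m = 1 := by
  simp [dSeg, Nat.sub_eq_zero_of_le h]

theorem dSeg_mul_dSeg {j k m : ℕ} (hjk : j ≤ k) (hkm : k ≤ m) :
    dSeg D k m * dSeg D j k = dSeg D j m := by
  have hsplit : List.range' j (k - j) ++ List.range' k (m - k) = List.range' j (m - j) := by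
    have h := List.range'_append_1 (s := j) (m := k - j) (n := m - k)
    rwa [Nat.add_sub_cancel' hjk, show k - j + (m - k) = m - j by omega] at h
  simp only [dSeg, ← hsplit, List.reverse_append, List.map_append, List.prod_append]

theorem dSeg_succ_self (k : ℕ) : dSeg D k (k + 1) = D k := by
  simp [dSeg]

theorem dSeg_succ {k m : ℕ} (h : k ≤ m) : dSeg D k (m + 1) = D m * dSeg D k m := by
  rw [← dSeg_mul_dSeg h m.le_succ, dSeg_succ_self]

theorem dSeg_eq_mul_D {k m : ℕ} (h : k < m) : dSeg D k m = dSeg D (k + 1) m * D k := by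
  rw [← dSeg_mul_dSeg k.le_succ h, dSeg_succ_self]

theorem lt_of_mem_w0List {i m : ℕ} (h : i ∈ w0List m) : i + 1 < m := by
  induction m with
  | zero => simp [w0List] at h
  | succ m ih =>
    simp only [w0List, List.mem_append, List.mem_reverse, List.mem_range] at h
    rcases h with h | h
    · exact (ih h).trans m.lt_succ_self
    · omega

theorem length_w0List_succ (m : ℕ) : (w0List (m + 1)).length = (w0List m).length + m := by
  simp [w0List]

theorem dLongest_succ (m : ℕ) : dLongest D (m + 1) = dLongest D m * dSeg D 0 m := by
  simp [dLongest, dSeg, w0List, List.range_eq_range']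

theorem dLongest_mul_dSeg_zero_mul (m : ℕ) (a : A) :
    dLongest D m * (dSeg D 0 m * a) = dLongest D (m + 1) * a := by
  rw [← mul_assoc, dLongest_succ]

theorem Relations.dSeg_mul_x (R : Relations n x D) {j k m : ℕ} (hm : m < n) (hj : j < n)
    (hjkm : j < k ∨ m < j) : dSeg D k m * x j = (-1 : ℤ) ^ (m - k) • (x j * dSeg D k m) := by
  have h := list_prod_mul_of_forall_anticomm (l := (List.range' k (m - k)).reverse.map D) (y := x j)
    (by
      simp only [List.mem_map, mem_reverse_range'_sub]
      rintro _ ⟨i, hi, rfl⟩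
      exact R.D_x_anticomm i j (by omega) hj (by omega) (by omega))
  simpa only [dSeg, List.length_map, List.length_reverse, List.length_range'] using h

theorem Relations.dSeg_mul_D (R : Relations n x D) {j k m : ℕ} (hm : m < n) (hj : j + 1 < n)
    (hjkm : j + 1 < k ∨ m < j) :
    dSeg D k m * D j = (-1 : ℤ) ^ (m - k) • (D j * dSeg D k m) := by
  have h := list_prod_mul_of_forall_anticomm (l := (List.range' k (m - k)).reverse.map D) (y := D j)
    (by
      simp only [List.mem_map, mem_reverse_range'_sub]
      rintro _ ⟨i, hi, rfl⟩
      exact R.D_anticomm i j (by omega) hj (by omega))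
  simpa only [dSeg, List.length_map, List.length_reverse, List.length_range'] using h

theorem Relations.dLongest_mul_x (R : Relations n x D) {j m : ℕ} (hmj : m ≤ j) (hj : j < n) :
    dLongest D m * x j = (-1 : ℤ) ^ (w0List m).length • (x j * dLongest D m) := by
  have h := list_prod_mul_of_forall_anticomm (l := (w0List m).map D) (y := x j)
    (by
      simp only [List.mem_map]
      rintro _ ⟨i, hi, rfl⟩
      have := lt_of_mem_w0List hi
      exact R.D_x_anticomm i j (by omega) hj (by omega) (by omega))
  simpa only [dLongest, List.length_map] using h

theorem LocalDifferential.iota_dLongest (L : LocalDifferential n x D ι d) {m : ℕ}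
    (hm : m ≤ n) : ι (dLongest D m) = (-1 : ℤ) ^ (w0List m).length • dLongest D m := by
  have h := map_list_prod_of_forall_eq_neg ι (l := (w0List m).map D)
    (by
      simp only [List.mem_map]
      rintro _ ⟨i, hi, rfl⟩
      have := lt_of_mem_w0List hi
      exact L.iota_D i (by omega))
  simpa only [dLongest, List.length_map] using h

theorem Relations.dSeg_zero_mul_D_zero (R : Relations n x D) {m : ℕ} (h1 : 1 ≤ m) (hm : m < n) :
    dSeg D 0 m * D 0 = 0 := by
  rw [dSeg_eq_mul_D h1, mul_assoc, R.D_sq 0 (by omega), mul_zero]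

theorem Relations.dSeg_zero_mul_D_succ (R : Relations n x D) {j m : ℕ} (hjm : j + 2 ≤ m)
    (hm : m < n) : dSeg D 0 m * D (j + 1) = (-1 : ℤ) ^ m • (D j * dSeg D 0 m) := by
  have hsplit : dSeg D 0 m = dSeg D (j + 2) m * (D (j + 1) * (D j * dSeg D 0 j)) := by
    rw [← dSeg_succ j.zero_le, ← dSeg_succ (j + 1).zero_le, dSeg_mul_dSeg (Nat.zero_le _) hjm]
  have hV : dSeg D 0 j * D (j + 1) = (-1 : ℤ) ^ j • (D (j + 1) * dSeg D 0 j) := by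
    simpa using R.dSeg_mul_D (k := 0) (m := j) (by omega) (by omega) (Or.inr j.lt_succ_self)
  have hA : dSeg D (j + 2) m * D j = (-1 : ℤ) ^ (m - (j + 2)) • (D j * dSeg D (j + 2) m) :=
    R.dSeg_mul_D hm (by omega) (Or.inl (by omega))
  have hsign : (-1 : ℤ) ^ j * (-1) ^ (m - (j + 2)) = (-1) ^ m := by
    rw [← pow_add, neg_one_pow_eq_pow_mod_two, neg_one_pow_eq_pow_mod_two m]
    congr 1
    omega
  calc dSeg D 0 m * D (j + 1)
      = (-1 : ℤ) ^ j • (dSeg D (j + 2) m * (D (j + 1) * D j * D (j + 1)) * dSeg D 0 j) := by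
        simp only [hsplit, mul_assoc, hV, mul_smul_comm]
    _ = (-1 : ℤ) ^ j • (dSeg D (j + 2) m * D j * (D (j + 1) * (D j * dSeg D 0 j))) := by
        rw [← R.braid j (by omega)]
        simp only [mul_assoc]
    _ = (-1 : ℤ) ^ m • (D j * dSeg D 0 m) := by
        rw [hA, hsplit, smul_mul_assoc, smul_smul, hsign, mul_assoc]

theorem Relations.dLongest_mul_D (R : Relations n x D) {j m : ℕ} (hjm : j + 2 ≤ m)
    (hm : m ≤ n) : dLongest D m * D j = 0 := by
  induction m generalizing j with
  | zero => omega
  | succ m ih =>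
    rw [dLongest_succ, mul_assoc]
    rcases j with _ | j
    · rw [R.dSeg_zero_mul_D_zero (by omega) (by omega), mul_zero]
    · rw [R.dSeg_zero_mul_D_succ (by omega) (by omega), mul_smul_comm, ← mul_assoc,
        ih (by omega) (by omega), zero_mul, smul_zero]

theorem Relations.dLongest_mul_dSeg_mul_dSeg (R : Relations n x D) {k m : ℕ} (hk : 1 ≤ k)
    (hkm : k < m) (hm : m < n) : dLongest D m * (dSeg D (k + 1) m * dSeg D 0 k) = 0 := by
  obtain ⟨k, rfl⟩ : ∃ k', k = k' + 1 := ⟨k - 1, by omega⟩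
  rw [dSeg_succ (Nat.zero_le k), ← mul_assoc (dSeg D (k + 1 + 1) m),
    R.dSeg_mul_D hm (by omega) (Or.inl (by omega)), smul_mul_assoc, mul_smul_comm, mul_assoc,
    ← mul_assoc (dLongest D m), R.dLongest_mul_D (by omega) hm.le, zero_mul, smul_zero]

theorem Relations.x_mul_dSeg_zero (R : Relations n x D) {i m : ℕ} (hi : i < m) (hm : m < n) :
    x i * dSeg D 0 m = (-1 : ℤ) ^ (m - (i + 1)) • (dSeg D (i + 1) m * dSeg D 0 i) +
      (-1 : ℤ) ^ m • (dSeg D 0 m * x (i + 1)) := by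
  have hsplit : dSeg D 0 m = dSeg D (i + 1) m * (D i * dSeg D 0 i) := by
    rw [← dSeg_succ (Nat.zero_le i), dSeg_mul_dSeg (Nat.zero_le _) hi]
  have hA : x i * dSeg D (i + 1) m = (-1 : ℤ) ^ (m - (i + 1)) • (dSeg D (i + 1) m * x i) :=
    mul_comm_of_eq_neg_one_pow_smul (R.dSeg_mul_x hm (by omega) (Or.inl i.lt_succ_self))
  have hV : x (i + 1) * dSeg D 0 i = (-1 : ℤ) ^ i • (dSeg D 0 i * x (i + 1)) := by
    simpa using mul_comm_of_eq_neg_one_pow_smul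
      (R.dSeg_mul_x (k := 0) (m := i) (by omega) (by omega) (Or.inr i.lt_succ_self))
  have hmix : x i * D i = 1 - D i * x (i + 1) := eq_sub_of_add_eq (R.x_D_add_D_x i (by omega))
  have hsign : -((-1 : ℤ) ^ (m - (i + 1)) * (-1) ^ i) = (-1) ^ m := by
    rw [← pow_add, ← neg_one_mul, ← pow_succ']
    congr 1
    omega
  calc x i * dSeg D 0 m
      = (-1 : ℤ) ^ (m - (i + 1)) • (dSeg D (i + 1) m * ((x i * D i) * dSeg D 0 i)) := by
        rw [hsplit, ← mul_assoc, hA, smul_mul_assoc]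
        simp only [mul_assoc]
    _ = (-1 : ℤ) ^ (m - (i + 1)) • (dSeg D (i + 1) m * dSeg D 0 i) -
          ((-1 : ℤ) ^ (m - (i + 1)) * (-1) ^ i) •
            (dSeg D (i + 1) m * (D i * dSeg D 0 i) * x (i + 1)) := by
        rw [hmix, sub_mul, one_mul, mul_assoc, hV]
        simp only [mul_sub, mul_smul_comm, smul_sub, smul_smul, mul_assoc]
    _ = _ := by
        rw [← hsplit, sub_eq_add_neg, ← neg_smul, hsign]

theorem Relations.dLongest_mul_x_mul_dSeg_zero (R : Relations n x D) {i m : ℕ} (hi1 : 1 ≤ i)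
    (hi : i < m) (hm : m < n) :
    dLongest D m * (x i * dSeg D 0 m) = (-1 : ℤ) ^ m • (dLongest D (m + 1) * x (i + 1)) := by
  rw [R.x_mul_dSeg_zero hi hm, mul_add, mul_smul_comm, R.dLongest_mul_dSeg_mul_dSeg hi1 hi hm,
    smul_zero, zero_add, mul_smul_comm, ← mul_assoc, ← dLongest_succ]

theorem Relations.dLongest_mul_x_zero_mul_dSeg_zero (R : Relations n x D) {m : ℕ} (h1 : 1 ≤ m)
    (hm : m < n) :
    dLongest D m * (x 0 * dSeg D 0 m) =
      (-1 : ℤ) ^ m • (dLongest D (m + 1) * x 1 - dLongest D m * dSeg D 1 m) := by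
  obtain ⟨m, rfl⟩ : ∃ m', m = m' + 1 := ⟨m - 1, by omega⟩
  rw [R.x_mul_dSeg_zero h1 hm, dSeg_of_le (le_refl 0), mul_one, mul_add, mul_smul_comm,
    mul_smul_comm, dLongest_mul_dSeg_zero_mul, Nat.add_sub_cancel, pow_succ]
  module

theorem Relations.dSeg_mul_x_mul_dSeg_zero (R : Relations n x D) {k m : ℕ} (hk : k < m)
    (hm : m < n) :
    dSeg D k m * (x k * dSeg D 0 k) =
      dSeg D (k + 1) m * dSeg D 0 k - dSeg D (k + 1) m * (x (k + 1) * dSeg D 0 (k + 1)) := by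
  rw [dSeg_eq_mul_D hk, mul_assoc, ← mul_assoc (D k),
    eq_sub_of_add_eq (R.D_x_add_x_D k (by omega)), sub_mul, one_mul, mul_sub, mul_assoc,
    ← dSeg_succ (Nat.zero_le k)]

/-- `∂_k x_k = 1 - x_{k+1} ∂_k`, and `∂_{w_0}` kills the term coming from `1`, so these terms
alternate in sign as `k` grows. -/
theorem Relations.dLongest_mul_dSeg_mul_x_mul_dSeg_zero (R : Relations n x D) {k m : ℕ}
    (hk : 1 ≤ k) (hkm : k ≤ m) (hm : m < n) :
    dLongest D m * (dSeg D 1 m * (x 1 * dSeg D 0 1)) =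
      (-1 : ℤ) ^ (k + 1) • (dLongest D m * (dSeg D k m * (x k * dSeg D 0 k))) := by
  induction k with
  | zero => omega
  | succ k ih =>
    rcases Nat.lt_or_ge k 1 with hk0 | hk1
    · obtain rfl : k = 0 := by omega
      simp
    · rw [ih hk1 (by omega), R.dSeg_mul_x_mul_dSeg_zero (by omega) hm, mul_sub,
        R.dLongest_mul_dSeg_mul_dSeg hk1 (by omega) hm, zero_sub, smul_neg, ← neg_smul,
        pow_succ _ (k + 1), mul_neg_one]

theorem Relations.dLongest_succ_mul_x_zero (R : Relations n x D) {m : ℕ} (h1 : 1 ≤ m)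
    (hm : m < n) :
    dLongest D (m + 1) * x 0 = dLongest D m * dSeg D 1 m +
      (-1 : ℤ) ^ (m + (w0List m).length) • (x m * dLongest D (m + 1)) := by
  have hstart : dLongest D (m + 1) * x 0 =
      dLongest D m * dSeg D 1 m - dLongest D m * (dSeg D 1 m * (x 1 * dSeg D 0 1)) := by
    have h := R.dSeg_mul_x_mul_dSeg_zero (k := 0) h1 hm
    rw [dSeg_of_le (le_refl 0), mul_one, mul_one] at h
    rw [dLongest_succ, mul_assoc, h, mul_sub]
  have hend : dLongest D m * (dSeg D m m * (x m * dSeg D 0 m)) =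
      (-1 : ℤ) ^ (w0List m).length • (x m * dLongest D (m + 1)) := by
    rw [dSeg_of_le le_rfl, one_mul, ← mul_assoc, R.dLongest_mul_x le_rfl (by omega),
      smul_mul_assoc, mul_assoc, ← dLongest_succ]
  rw [hstart, R.dLongest_mul_dSeg_mul_x_mul_dSeg_zero h1 le_rfl hm, hend, smul_smul, ← pow_add,
    sub_eq_add_neg, ← neg_smul, add_right_comm, pow_succ, mul_neg_one, neg_neg]

theorem Relations.sum_parity_smul_dLongest_mul_x_mul_dSeg_zero (R : Relations n x D) {m : ℕ}
    (h1 : 1 ≤ m) (hm : m < n) :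
    ∑ i ∈ range m, parity (m - i) • (dLongest D m * (x i * dSeg D 0 m)) =
      (-1 : ℤ) ^ m • (∑ i ∈ range m, parity (m - i) • (dLongest D (m + 1) * x (i + 1)) -
        parity m • (dLongest D m * dSeg D 1 m)) := by
  obtain ⟨m, rfl⟩ : ∃ m', m = m' + 1 := ⟨m - 1, by omega⟩
  have hterm : ∀ i ∈ range m,
      parity (m + 1 - (i + 1)) • (dLongest D (m + 1) * (x (i + 1) * dSeg D 0 (m + 1))) =
        (-1 : ℤ) ^ (m + 1) •
          parity (m + 1 - (i + 1)) • (dLongest D (m + 1 + 1) * x (i + 1 + 1)) := by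
    intro i hi
    rw [R.dLongest_mul_x_mul_dSeg_zero (by omega) (by simp at hi; omega) hm, smul_comm]
  rw [sum_range_succ', sum_range_succ', sum_congr rfl hterm, ← smul_sum,
    R.dLongest_mul_x_zero_mul_dSeg_zero h1 hm]
  simp only [Nat.sub_zero, zero_add]
  module

theorem LocalDifferential.d_dSeg_zero (L : LocalDifferential n x D ι d) (R : Relations n x D)
    {m : ℕ} (hm : m < n) :
    d (dSeg D 0 m) = ∑ i ∈ range m, x i * dSeg D 0 m +
      (-1 : ℤ) ^ (m + 1) • ∑ i ∈ range m, dSeg D 0 m * x (i + 1) := by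
  induction m with
  | zero => simp [dSeg_of_le, map_one_eq_zero_of_twisted_leibniz L.leibniz]
  | succ m ih =>
    have hleft : D m * ∑ i ∈ range m, x i * dSeg D 0 m =
        -∑ i ∈ range m, x i * dSeg D 0 (m + 1) := by
      rw [mul_sum, ← sum_neg_distrib]
      refine sum_congr rfl fun i hi => ?_
      rw [mem_range] at hi
      rw [← mul_assoc, R.D_x_anticomm m i (by omega) (by omega) (by omega) (by omega), neg_mul,
        mul_assoc, ← dSeg_succ (Nat.zero_le m)]
    have hright : D m * ∑ i ∈ range m, dSeg D 0 m * x (i + 1) =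
        ∑ i ∈ range m, dSeg D 0 (m + 1) * x (i + 1) := by
      simp only [mul_sum, ← mul_assoc, ← dSeg_succ (Nat.zero_le m)]
    have hlast := R.x_mul_dSeg_zero (i := m) (m := m + 1) m.lt_succ_self hm
    rw [Nat.sub_self, pow_zero, one_smul, dSeg_of_le le_rfl, one_mul] at hlast
    rw [dSeg_succ (Nat.zero_le m), L.leibniz, L.d_D m hm, one_mul, L.iota_D m hm, ih (by omega),
      neg_mul, mul_add, hleft, mul_smul_comm, hright, ← dSeg_succ (Nat.zero_le m), sum_range_succ,
      sum_range_succ, hlast]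
    rw [pow_succ _ (m + 1)]
    module

theorem LocalDifferential.d_dLongest_succ (L : LocalDifferential n x D ι d) (R : Relations n x D)
    {m : ℕ} (hm : m < n)
    (ih : d (dLongest D m) = ∑ i ∈ range m, parity i • (x i * dLongest D m) -
      (-1 : ℤ) ^ (w0List m).length •
        ∑ i ∈ range m, parity (m - (i + 1)) • (dLongest D m * x i)) :
    d (dLongest D (m + 1)) = ∑ i ∈ range m, parity i • (x i * dLongest D (m + 1)) +
      (-1 : ℤ) ^ (w0List m).length •
        ∑ i ∈ range m, parity (m - i) • (dLongest D m * (x i * dSeg D 0 m)) +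
      ((-1 : ℤ) ^ (w0List m).length * (-1) ^ (m + 1)) •
        ∑ i ∈ range m, dLongest D (m + 1) * x (i + 1) := by
  rw [dLongest_succ, L.leibniz, ih, L.iota_dLongest hm.le, L.d_dSeg_zero R hm]
  simp only [sub_mul, sum_mul, smul_mul_assoc, mul_add, mul_sum, mul_smul_comm, mul_assoc,
    ← dLongest_succ, dLongest_mul_dSeg_zero_mul, ← smul_sum]
  rw [sum_parity_sub_smul]
  module

theorem LocalDifferential.d_dLongest (L : LocalDifferential n x D ι d) (R : Relations n x D)
    {m : ℕ} (hm : m ≤ n) :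
    d (dLongest D m) = ∑ i ∈ range m, parity i • (x i * dLongest D m) -
      (-1 : ℤ) ^ (w0List m).length •
        ∑ i ∈ range m, parity (m - (i + 1)) • (dLongest D m * x i) := by
  induction m with
  | zero => simp [dLongest, w0List, map_one_eq_zero_of_twisted_leibniz L.leibniz]
  | succ m ih =>
    rcases Nat.eq_zero_or_pos m with rfl | h1
    · simp [dLongest, w0List, parity, map_one_eq_zero_of_twisted_leibniz L.leibniz]
    rw [L.d_dLongest_succ R hm (ih (by omega)),
      R.sum_parity_smul_dLongest_mul_x_mul_dSeg_zero h1 hm, sum_parity_sub_smul,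
      eq_sub_of_add_eq (R.dLongest_succ_mul_x_zero h1 hm).symm, length_w0List_succ,
      sum_range_succ _ m, sum_range_succ' _ m]
    simp only [Nat.add_sub_add_right, Nat.sub_zero, pow_add, pow_one]
    rcases neg_one_pow_eq_or ℤ m with hs | hs <;>
      rcases neg_one_pow_eq_or ℤ (w0List m).length with hε | hε <;>
      simp only [hs, hε] <;> module

theorem LocalDifferential.d_zsmul (L : LocalDifferential n x D ι d) (z : ℤ) (a : A) :
    d (z • a) = z • d a :=
  map_zsmul (AddMonoidHom.mk' d L.add) z a

theorem xDeltaN_eq_xMonomial (n : ℕ) (x : ℕ → A) :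
    xDeltaN n x = xMonomial x (fun i => n - (i + 1)) n := by
  simp only [xDeltaN, xMonomial, Nat.sub_sub, Nat.add_comm 1]

theorem LocalDifferential.d_dLongest_mul_xDeltaN (L : LocalDifferential n x D ι d)
    (R : Relations n x D) :
    d (dLongest D n * xDeltaN n x) =
      ∑ i ∈ range n, parity i • (x i * (dLongest D n * xDeltaN n x)) := by
  rw [L.leibniz, L.d_dLongest R le_rfl, L.iota_dLongest le_rfl, xDeltaN_eq_xMonomial,
    L.d_xMonomial R _ le_rfl]
  simp only [sub_mul, sum_mul, smul_mul_assoc, mul_sum, mul_smul_comm, mul_assoc, smul_sum,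
    smul_smul, mul_comm ((-1 : ℤ) ^ _)]
  abel

end OddNilHecke

open OddNilHecke

/-- In `ONH_n` with the local differential (`d(x_i) = x_i²`,
`d(∂_i) = 1`), the idempotent `𝚎_n = (−1)^{C(n,3)} ∂_{w_0} x^δ` satisfies
`d(𝚎_n) = Σ_{i=1}^n {i−1} x_i 𝚎_n` (written here 0-indexed, `{m}` being `0`
for `m` even and `1` for `m` odd). -/
theorem stmt9 {A : Type*} [Ring A] (n : ℕ) (x D : ℕ → A)
    (hxx : ∀ i j, i < n → j < n → i ≠ j → x i * x j = -(x j * x i))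
    (hDDdist : ∀ i j, i + 1 < n → j + 1 < n → (i + 1 < j ∨ j + 1 < i) →
      D i * D j = -(D j * D i))
    (hD2 : ∀ i, i + 1 < n → D i * D i = 0)
    (hbraid : ∀ i, i + 2 < n → D i * D (i + 1) * D i = D (i + 1) * D i * D (i + 1))
    (hDx : ∀ i j, i + 1 < n → j < n → j ≠ i → j ≠ i + 1 → D i * x j = -(x j * D i))
    (hmixa : ∀ i, i + 1 < n → x i * D i + D i * x (i + 1) = 1)
    (hmixb : ∀ i, i + 1 < n → D i * x i + x (i + 1) * D i = 1)
    (ι : A →+* A) (hιx : ∀ i, i < n → ι (x i) = -x i)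
    (hιD : ∀ i, i + 1 < n → ι (D i) = -D i)
    (d : A → A)
    (hd_add : ∀ a b, d (a + b) = d a + d b)
    (hd_leib : ∀ a b, d (a * b) = d a * b + ι a * d b)
    (hdx : ∀ i, i < n → d (x i) = x i ^ 2)
    (hdD : ∀ i, i + 1 < n → d (D i) = 1) :
    d (onhIdem n x D) =
      ∑ i ∈ Finset.range n, (if Even i then (0 : A) else 1) *
        (x i * onhIdem n x D) := by
  have R : Relations n x D := ⟨hxx, hDDdist, hD2, hbraid, hDx, hmixa, hmixb⟩
  have L : LocalDifferential n x D ι d := ⟨hιx, hιD, hd_add, hd_leib, hdx, hdD⟩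
  have he : onhIdem n x D = (-1 : ℤ) ^ n.choose 3 • (dLongest D n * xDeltaN n x) := by
    rw [onhIdem, zsmul_eq_mul]
    push_cast
    rfl
  simp only [ite_even_mul_eq_parity_smul, he, L.d_zsmul, L.d_dLongest_mul_xDeltaN R, mul_smul_comm,
    Finset.smul_sum]
end
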